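/- Let 𝐭 and 𝐮 be infinite sequences over A, and suppose there is an index at which H(𝐭[i], 𝐮[i]) ∉ {0, 3}; let j be the smallest such index. Then the infinite Stewart words T(𝐭) and T(𝐮) have no common factor of length greater than 3^{j+2}. -/

import Mathlib

/-- The alphabet B = {0, 1, ?}. -/
inductive B : Type
  | b0 : B
  | b1 : B
  | bq : B
deriving DecidableEq, Inhabited, Repr

/-- The six Stewart patterns a = 01?, b = 10?, c = 0?1, d = 1?0, e = ?01, f = ?10. -/
inductive A : Type
  | a : A
  | b : A
  | c : A
  | d : A
  | e : A
  | f : A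
deriving DecidableEq, Inhabited, Repr

open B in
/-- The length-3 word over B associated with a Stewart pattern. -/
def pat : A → List B
  | .a => [b0, b1, bq]
  | .b => [b1, b0, bq]
  | .c => [b0, bq, b1]
  | .d => [b1, bq, b0]
  | .e => [bq, b0, b1]
  | .f => [bq, b1, b0]

/-- Replace the occurrences of `?` in the first word, in order,
by the symbols of the second word. -/
def fill : List B → List B → List B
  | [], _ => []
  | B.bq :: rest, s :: ss => s :: fill rest ss
  | B.bq :: rest, [] => B.bq :: fill rest []
  | x :: rest, ss => x :: fill rest ss

/-- Helper: the finite Stewart word of the *reverse* of `t`. -/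
def Trev : List A → List B
  | [] => [B.bq]
  | g :: t => fill (Trev t ++ Trev t ++ Trev t) (pat g)

/-- The finite Stewart word `T(t)`, of length `3 ^ t.length`:
`T(ε) = ?`, and `T(t g)` is obtained from `T(t)T(t)T(t)` by replacing its
three occurrences of `?`, in order, by the three symbols of the pattern `g`. -/
def stewT (t : List A) : List B := Trev t.reverse

/-- The length-`r` prefix of an infinite sequence of Stewart patterns, as a list. -/
def prefT (t : ℕ → A) (r : ℕ) : List A := List.ofFn (fun i : Fin r => t i)

/-- The infinite Stewart word `T(𝐭)`: its symbol at position `n` is the eventual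
value of `T(t_0 ⋯ t_{r-1})[n]` as `r → ∞`. -/
noncomputable def stewInf (t : ℕ → A) (n : ℕ) : B :=
  Classical.epsilon (fun v : B => ∃ R : ℕ, ∀ r ≥ R, (stewT (prefT t r)).getD n B.bq = v)

/-- `w` occurs as a factor of the infinite word `x`. -/
def FactorOf (w : List B) (x : ℕ → B) : Prop :=
  ∃ i : ℕ, ∀ j : ℕ, j < w.length → w.getD j B.bq = x (i + j)

/-- `w` has period `p ≥ 1`: `w[i] = w[i+p]` for all `0 ≤ i < |w| - p`. -/
def HasPeriod (w : List B) (p : ℕ) : Prop :=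
  1 ≤ p ∧ ∀ i : ℕ, i + p < w.length → w.getD i B.bq = w.getD (i + p) B.bq

/-- The least period `per(w)` of a word. -/
noncomputable def leastPeriod (w : List B) : ℕ := sInf {p | HasPeriod w p}

/-- The exponent `exp(w) = |w| / per(w)` of a word. -/
noncomputable def expo (w : List B) : ℝ := (w.length : ℝ) / (leastPeriod w : ℝ)

/-- The Hamming distance between two Stewart patterns: the number of positions
`p ∈ {0,1,2}` at which the length-3 words differ. -/
def ham (g h : A) : ℕ :=
  (Finset.univ.filter fun p : Fin 3 => (pat g).getD p B.bq ≠ (pat h).getD p B.bq).card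

/-- `t` is ultimately periodic. -/
def UltPeriodic (t : ℕ → A) : Prop :=
  ∃ N : ℕ, ∃ p : ℕ, 1 ≤ p ∧ ∀ n ≥ N, t (n + p) = t n

/-- An infinite word `x` is 3-automatic: there is a finite automaton with output,
reading base-3 representations least-significant-digit first (trailing zeros
allowed), computing `x`. -/
def IsThreeAutomatic (x : ℕ → B) : Prop :=
  ∃ (Q : Type) (_ : Finite Q) (δ : Q → Fin 3 → Q) (q0 : Q) (τ : Q → B),
    ∀ (r : ℕ) (e : Fin r → Fin 3),
      τ (List.foldl δ q0 (List.ofFn fun i => e i)) =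
        x (∑ i : Fin r, (e i).val * 3 ^ (i : ℕ))

-- ============ auxiliary development ============
namespace StewAux
open B

def holeIdx : A → ℕ
  | .a => 2 | .b => 2 | .c => 1 | .d => 1 | .e => 0 | .f => 0

lemma holeIdx_lt (g : A) : holeIdx g < 3 := by cases g <;> simp [holeIdx]

def Fg (g : A) (c : B) : List B := (pat g).map (fun x => if x = B.bq then c else x)

def myT : List A → List B
  | [] => [B.bq]
  | g :: l => (myT l).flatMap (Fg g)

lemma fill_nil (p : List B) : fill [] p = [] := rfl
lemma fill_bq_cons (r : List B) (s : B) (ss : List B) :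
    fill (bq :: r) (s :: ss) = s :: fill r ss := rfl
lemma fill_bq_nil (r : List B) : fill (bq :: r) [] = bq :: fill r [] := rfl
lemma fill_b0 (r : List B) (ss : List B) : fill (b0 :: r) ss = b0 :: fill r ss := rfl
lemma fill_b1 (r : List B) (ss : List B) : fill (b1 :: r) ss = b1 :: fill r ss := rfl

lemma fill_nil_right : ∀ X : List B, fill X [] = X := by
  intro X; induction X with
  | nil => rfl
  | cons x r ih => cases x <;> simp [fill_b0, fill_b1, fill_bq_nil, ih]

lemma fill_append : ∀ (X : List B) (p : List B) (Y : List B),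
    fill (X ++ Y) p = fill X p ++ fill Y (p.drop (X.count bq)) := by
  intro X; induction X with
  | nil => intro p Y; simp [fill_nil]
  | cons x r ih =>
    intro p Y
    cases x with
    | b0 => simp [fill_b0, ih, List.count_cons]
    | b1 => simp [fill_b1, ih, List.count_cons]
    | bq =>
      cases p with
      | nil => simp [fill_bq_nil, ih, List.count_cons]
      | cons s ss => simp [fill_bq_cons, ih, List.count_cons]

lemma Fg_bq (g : A) : Fg g bq = pat g := by cases g <;> rfl
lemma count_pat (g : A) : (pat g).count bq = 1 := by cases g <;> rfl
lemma fill_pat (g : A) (s : B) (ss : List B) : fill (pat g) (s :: ss) = Fg g s := by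
  cases g <;> rfl
lemma Fg_b0_nq (g : A) : (Fg g b0).count bq = 0 := by cases g <;> rfl
lemma Fg_b1_nq (g : A) : (Fg g b1).count bq = 0 := by cases g <;> rfl
lemma fill_Fg_b0 (g : A) (p : List B) : fill (Fg g b0) p = Fg g b0 := by cases g <;> rfl
lemma fill_Fg_b1 (g : A) (p : List B) : fill (Fg g b1) p = Fg g b1 := by cases g <;> rfl

lemma fill_flatMap (g' : A) : ∀ (W : List B) (p : List B),
    (fill W p).flatMap (Fg g') = fill (W.flatMap (Fg g')) p := by
  intro W; induction W with
  | nil => intro p; rfl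
  | cons x r ih =>
    intro p
    cases x with
    | b0 =>
      simp only [fill_b0, List.flatMap_cons, fill_append, Fg_b0_nq, List.drop_zero,
        fill_Fg_b0, ih]
    | b1 =>
      simp only [fill_b1, List.flatMap_cons, fill_append, Fg_b1_nq, List.drop_zero,
        fill_Fg_b1, ih]
    | bq =>
      cases p with
      | nil =>
        simp only [fill_bq_nil, List.flatMap_cons, Fg_bq, fill_append, count_pat,
          fill_nil_right, ih]
      | cons s ss =>
        simp only [fill_bq_cons, List.flatMap_cons, Fg_bq, fill_append, count_pat,
          fill_pat, List.drop_one, List.tail_cons, ih]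

lemma myT_append : ∀ (l : List A) (g : A),
    myT (l ++ [g]) = fill (myT l ++ myT l ++ myT l) (pat g) := by
  intro l; induction l with
  | nil => intro g; cases g <;> rfl
  | cons g' l' ih =>
    intro g
    show (myT (l' ++ [g])).flatMap (Fg g') = _
    rw [ih, fill_flatMap]
    simp only [myT, List.flatMap_append]

lemma Trev_eq_myT : ∀ l : List A, Trev l = myT l.reverse := by
  intro l; induction l with
  | nil => rfl
  | cons g t ih =>
    show fill (Trev t ++ Trev t ++ Trev t) (pat g) = _
    rw [ih, List.reverse_cons, myT_append]

lemma stewT_eq_myT (l : List A) : stewT l = myT l := by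
  rw [stewT, Trev_eq_myT, List.reverse_reverse]

lemma Fg_length (g : A) (c : B) : (Fg g c).length = 3 := by cases g <;> simp [Fg, pat]

lemma flatMap_length (g : A) : ∀ W : List B, (W.flatMap (Fg g)).length = 3 * W.length := by
  intro W; induction W with
  | nil => rfl
  | cons c r ih => simp [List.flatMap_cons, Fg_length, ih]; ring

lemma myT_length : ∀ l : List A, (myT l).length = 3 ^ l.length := by
  intro l; induction l with
  | nil => rfl
  | cons g l' ih => show (List.flatMap _ _).length = _; rw [flatMap_length, ih]; simp [pow_succ]; ring

lemma flatMap_getD (g : A) : ∀ (W : List B) (n : ℕ), n < 3 * W.length →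
    ((W.flatMap (Fg g)).getD n bq) = (Fg g (W.getD (n / 3) bq)).getD (n % 3) bq := by
  intro W; induction W with
  | nil => intro n h; simp at h
  | cons c r ih =>
    intro n h
    rw [List.flatMap_cons]
    by_cases hn : n < 3
    · rw [List.getD_append _ _ _ _ (by rw [Fg_length]; omega)]
      have h0 : n / 3 = 0 := by omega
      have h1 : n % 3 = n := by omega
      rw [h0, h1]; rfl
    · rw [List.getD_append_right _ _ _ _ (by rw [Fg_length]; omega)]
      simp only [Fg_length]
      have := ih (n - 3) (by simp at h ⊢; omega)
      rw [this]
      have e1 : (n - 3) / 3 = n / 3 - 1 := by omega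
      have e2 : (n - 3) % 3 = n % 3 := by omega
      have e3 : (c :: r).getD (n / 3) bq = r.getD (n / 3 - 1) bq := by
        cases' Nat.exists_eq_add_of_le (show 1 ≤ n / 3 by omega) with k hk
        rw [hk, Nat.add_comm]; rfl
      rw [e1, e2, e3]

lemma Fg_getD (g : A) (c : B) (r : ℕ) (hr : r < 3) :
    (Fg g c).getD r bq = if r = holeIdx g then c else (pat g).getD r bq := by
  interval_cases r <;> cases g <;> simp [Fg, pat, holeIdx]

lemma myT_getD_cons (g : A) (l : List A) (n : ℕ) (hn : n < 3 ^ (l.length + 1)) :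
    (myT (g :: l)).getD n bq =
      if n % 3 = holeIdx g then (myT l).getD (n / 3) bq else (pat g).getD (n % 3) bq := by
  show ((myT l).flatMap (Fg g)).getD n bq = _
  rw [flatMap_getD g (myT l) n (by rw [myT_length]; rw [pow_succ] at hn; omega),
    Fg_getD g _ _ (by omega)]

lemma prefT_succ (v : ℕ → A) (r : ℕ) :
    prefT v (r + 1) = v 0 :: prefT (fun i => v (i + 1)) r := by
  simp [prefT, List.ofFn_succ]

lemma prefT_length (v : ℕ → A) (r : ℕ) : (prefT v r).length = r := by
  simp [prefT]

lemma lt_pow3 {n r : ℕ} (h : n < r) : n < 3 ^ r :=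
  lt_trans h (Nat.lt_pow_self (by norm_num : 1 < 3))

lemma evE : ∀ (k : ℕ) (v : ℕ → A) (n r : ℕ),
    (∀ i < k, n / 3 ^ i % 3 = holeIdx (v i)) → n / 3 ^ k % 3 ≠ holeIdx (v k) →
    k < r → n < 3 ^ r →
    (myT (prefT v r)).getD n bq = (pat (v k)).getD (n / 3 ^ k % 3) bq := by
  intro k
  induction k with
  | zero =>
    intro v n r _ hk hr hn
    obtain ⟨r', rfl⟩ : ∃ r', r = r' + 1 := ⟨r - 1, by omega⟩
    rw [prefT_succ, myT_getD_cons _ _ _ (by rwa [prefT_length])]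
    simp only [pow_zero, Nat.div_one] at hk ⊢
    rw [if_neg hk]
  | succ k ih =>
    intro v n r hlt hk hr hn
    obtain ⟨r', rfl⟩ : ∃ r', r = r' + 1 := ⟨r - 1, by omega⟩
    rw [prefT_succ, myT_getD_cons _ _ _ (by rwa [prefT_length])]
    have h0 : n % 3 = holeIdx (v 0) := by
      have := hlt 0 (by omega); simpa using this
    rw [if_pos h0]
    have hdiv : ∀ i : ℕ, n / 3 / 3 ^ i = n / 3 ^ (i + 1) := by
      intro i; rw [Nat.div_div_eq_div_mul, pow_succ']
    have := ih (fun i => v (i + 1)) (n / 3) r'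
      (fun i hi => by rw [hdiv]; exact hlt (i + 1) (by omega))
      (by rw [hdiv]; exact hk) (by omega)
      (by rw [pow_succ] at hn; omega)
    rw [this, hdiv]

lemma evQ : ∀ (r : ℕ) (v : ℕ → A) (n : ℕ),
    (∀ i, n / 3 ^ i % 3 = holeIdx (v i)) → n < 3 ^ r →
    (myT (prefT v r)).getD n bq = bq := by
  intro r
  induction r with
  | zero =>
    intro v n _ hn
    interval_cases n
    rfl
  | succ r ih =>
    intro v n hall hn
    rw [prefT_succ, myT_getD_cons _ _ _ (by rwa [prefT_length])]
    have h0 : n % 3 = holeIdx (v 0) := by have := hall 0; simpa using this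
    rw [if_pos h0]
    apply ih
    · intro i
      rw [Nat.div_div_eq_div_mul, ← pow_succ']
      exact hall (i + 1)
    · rw [pow_succ] at hn; omega

lemma exists_ev (v : ℕ → A) (n : ℕ) :
    ∃ V : B, ∃ R : ℕ, ∀ r ≥ R, (stewT (prefT v r)).getD n bq = V := by
  by_cases h : ∃ i, n / 3 ^ i % 3 ≠ holeIdx (v i)
  · set k := Nat.find h with hk
    refine ⟨(pat (v k)).getD (n / 3 ^ k % 3) bq, max (k + 1) (n + 1), fun r hr => ?_⟩
    rw [stewT_eq_myT]
    exact evE k v n r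
      (fun i hi => by have := Nat.find_min h hi; tauto)
      (Nat.find_spec h) (by omega) (lt_pow3 (by omega))
  · push_neg at h
    refine ⟨bq, n + 1, fun r hr => ?_⟩
    rw [stewT_eq_myT]
    exact evQ r v n h (lt_pow3 (by omega))

lemma stewInf_eq_of_ev {v : ℕ → A} {n : ℕ} {V : B}
    (h : ∃ R : ℕ, ∀ r ≥ R, (stewT (prefT v r)).getD n bq = V) : stewInf v n = V := by
  have hex : ∃ V' : B, ∃ R : ℕ, ∀ r ≥ R, (stewT (prefT v r)).getD n B.bq = V' := ⟨V, h⟩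
  have hs := Classical.epsilon_spec hex
  obtain ⟨R1, h1⟩ := hs
  obtain ⟨R2, h2⟩ := h
  have e1 := h1 (max R1 R2) (le_max_left _ _)
  have e2 := h2 (max R1 R2) (le_max_right _ _)
  rw [stewInf, ← e1, e2]

lemma stewInf_nonhole {v : ℕ → A} {n : ℕ} (h : n % 3 ≠ holeIdx (v 0)) :
    stewInf v n = (pat (v 0)).getD (n % 3) bq := by
  apply stewInf_eq_of_ev
  refine ⟨n + 1, fun r hr => ?_⟩
  rw [stewT_eq_myT]
  have : n / 3 ^ 0 % 3 ≠ holeIdx (v 0) := by simpa using h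
  have := evE 0 v n r (by omega) this (by omega) (lt_pow3 (by omega))
  simpa using this

lemma stewInf_hole {v : ℕ → A} {n : ℕ} (h : n % 3 = holeIdx (v 0)) :
    stewInf v n = stewInf (fun i => v (i + 1)) (n / 3) := by
  obtain ⟨V, R, hR⟩ := exists_ev (fun i => v (i + 1)) (n / 3)
  rw [show stewInf (fun i => v (i + 1)) (n / 3) = V from stewInf_eq_of_ev ⟨R, hR⟩]
  apply stewInf_eq_of_ev
  refine ⟨max (R + 1) (n + 1), fun r hr => ?_⟩
  obtain ⟨r', rfl⟩ : ∃ r', r = r' + 1 := ⟨r - 1, by omega⟩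
  rw [stewT_eq_myT, prefT_succ,
    myT_getD_cons _ _ _ (by rw [prefT_length]; exact lt_pow3 (by omega)), if_pos h]
  have := hR r' (by omega)
  rwa [stewT_eq_myT] at this

lemma pat_ne (g : A) (r1 r2 : ℕ) (h1 : r1 < 3) (h2 : r2 < 3) (h3 : r1 ≠ r2)
    (h4 : r1 ≠ holeIdx g) (h5 : r2 ≠ holeIdx g) :
    (pat g).getD r1 bq ≠ (pat g).getD r2 bq := by
  interval_cases r1 <;> interval_cases r2 <;> cases g <;> simp_all [pat, holeIdx]

lemma pat_ne2 (g h : A) (hgh : ham g h = 2) (r1 r2 : ℕ) (h1 : r1 < 3) (h2 : r2 < 3)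
    (h4 : r1 ≠ holeIdx g) (h5 : r2 ≠ holeIdx h)
    (hal : (r2 + holeIdx g) % 3 = (r1 + holeIdx h) % 3) :
    (pat g).getD r1 bq ≠ (pat h).getD r2 bq := by
  interval_cases r1 <;> interval_cases r2 <;> cases g <;> cases h <;>
    first
      | (exfalso; revert hgh; decide)
      | simp_all [pat, holeIdx]

lemma no_run (v : ℕ → A) (m : ℕ) :
    ¬ (stewInf v m = stewInf v (m + 1) ∧ stewInf v (m + 1) = stewInf v (m + 2)) := by
  rintro ⟨h1, h2⟩
  have hh : holeIdx (v 0) < 3 := holeIdx_lt _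
  obtain ⟨a, b, ha3, hb3, hab, hma, hmb⟩ :
      ∃ a b : ℕ, a < 3 ∧ b < 3 ∧ (m + a) % 3 ≠ (m + b) % 3 ∧
        (m + a) % 3 ≠ holeIdx (v 0) ∧ (m + b) % 3 ≠ holeIdx (v 0) := by
    refine ⟨(holeIdx (v 0) + 1 + 3 - m % 3) % 3, (holeIdx (v 0) + 2 + 3 - m % 3) % 3,
      by omega, by omega, by omega, by omega, by omega⟩
  have key : ∀ x, x < 3 → stewInf v (m + x) = stewInf v m := by
    intro x hx
    interval_cases x
    · simp
    · exact h1.symm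
    · exact (h1.trans h2).symm
  have e1 := stewInf_nonhole (v := v) (n := m + a) hma
  have e2 := stewInf_nonhole (v := v) (n := m + b) hmb
  have : (pat (v 0)).getD ((m + a) % 3) bq = (pat (v 0)).getD ((m + b) % 3) bq := by
    rw [← e1, ← e2, key a ha3, key b hb3]
  exact pat_ne (v 0) _ _ (by omega) (by omega) hab hma hmb this

lemma misaligned (t u : ℕ → A) (i1 i2 L : ℕ) (hL : 9 ≤ L)
    (hEq : ∀ p < L, stewInf t (i1 + p) = stewInf u (i2 + p))
    (hC : (holeIdx (t 0) + i2) % 3 ≠ (holeIdx (u 0) + i1) % 3) : False := by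
  have hh1 : holeIdx (t 0) < 3 := holeIdx_lt _
  have hh2 : holeIdx (u 0) < 3 := holeIdx_lt _
  obtain ⟨p0, hp03, hp0⟩ : ∃ p0, p0 < 3 ∧ (i2 + p0) % 3 = holeIdx (u 0) :=
    ⟨(holeIdx (u 0) + 3 - i2 % 3) % 3, by omega, by omega⟩
  have hne : (i1 + p0) % 3 ≠ holeIdx (t 0) := by omega
  have key : ∀ q, q < 3 → stewInf (fun i => u (i + 1)) ((i2 + p0) / 3 + q) =
      (pat (t 0)).getD ((i1 + p0) % 3) bq := by
    intro q hq
    have e1 : stewInf t (i1 + (p0 + 3 * q)) = (pat (t 0)).getD ((i1 + p0) % 3) bq := by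
      rw [stewInf_nonhole (by omega : (i1 + (p0 + 3 * q)) % 3 ≠ holeIdx (t 0))]
      congr 1; omega
    have e2 : stewInf u (i2 + (p0 + 3 * q)) = stewInf (fun i => u (i + 1)) ((i2 + p0) / 3 + q) := by
      rw [stewInf_hole (by omega : (i2 + (p0 + 3 * q)) % 3 = holeIdx (u 0))]
      congr 1; omega
    rw [← e2, ← hEq (p0 + 3 * q) (by omega), e1]
  apply no_run (fun i => u (i + 1)) ((i2 + p0) / 3)
  constructor
  · rw [show (i2 + p0) / 3 + 1 = (i2 + p0) / 3 + 1 from rfl, key 1 (by omega)]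
    have := key 0 (by omega); rw [add_zero] at this; rw [this]
  · rw [key 1 (by omega), key 2 (by omega)]

lemma main : ∀ (j : ℕ) (t u : ℕ → A), ham (t j) (u j) = 2 →
    ∀ i1 i2 : ℕ, ¬ (∀ p < 3 ^ (j + 2), stewInf t (i1 + p) = stewInf u (i2 + p)) := by
  intro j
  induction j with
  | zero =>
    intro t u h2 i1 i2 hEq
    by_cases hC : (holeIdx (t 0) + i2) % 3 = (holeIdx (u 0) + i1) % 3
    · -- aligned:直接 mismatch at a non-hole position
      have hh1 : holeIdx (t 0) < 3 := holeIdx_lt _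
      have hh2 : holeIdx (u 0) < 3 := holeIdx_lt _
      obtain ⟨p0, hp03, hr1⟩ : ∃ p0, p0 < 3 ∧ (i1 + p0) % 3 = (holeIdx (t 0) + 1) % 3 :=
        ⟨(holeIdx (t 0) + 1 + 3 - i1 % 3) % 3, by omega, by omega⟩
      have hr1ne : (i1 + p0) % 3 ≠ holeIdx (t 0) := by omega
      have hr2ne : (i2 + p0) % 3 ≠ holeIdx (u 0) := by omega
      have := hEq p0 (by norm_num; omega)
      rw [stewInf_nonhole hr1ne, stewInf_nonhole hr2ne] at this
      exact pat_ne2 (t 0) (u 0) h2 _ _ (by omega) (by omega) hr1ne hr2ne (by omega) this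
    · exact misaligned t u i1 i2 (3 ^ 2) (by norm_num) hEq hC
  | succ j ih =>
    intro t u h2 i1 i2 hEq
    by_cases hC : (holeIdx (t 0) + i2) % 3 = (holeIdx (u 0) + i1) % 3
    · have hh1 : holeIdx (t 0) < 3 := holeIdx_lt _
      have hh2 : holeIdx (u 0) < 3 := holeIdx_lt _
      obtain ⟨p0, hp03, hr1⟩ : ∃ p0, p0 < 3 ∧ (i1 + p0) % 3 = holeIdx (t 0) :=
        ⟨(holeIdx (t 0) + 3 - i1 % 3) % 3, by omega, by omega⟩
      have hr2 : (i2 + p0) % 3 = holeIdx (u 0) := by omega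
      apply ih (fun i => t (i + 1)) (fun i => u (i + 1)) h2 ((i1 + p0) / 3) ((i2 + p0) / 3)
      intro q hq
      have hpow : 3 ^ (j + 1 + 2) = 3 * 3 ^ (j + 2) := by rw [pow_succ]; ring
      have := hEq (p0 + 3 * q) (by omega)
      rw [stewInf_hole (by omega : (i1 + (p0 + 3 * q)) % 3 = holeIdx (t 0)),
        stewInf_hole (by omega : (i2 + (p0 + 3 * q)) % 3 = holeIdx (u 0))] at this
      have d1 : (i1 + (p0 + 3 * q)) / 3 = (i1 + p0) / 3 + q := by omega
      have d2 : (i2 + (p0 + 3 * q)) / 3 = (i2 + p0) / 3 + q := by omega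
      rw [d1, d2] at this
      exact this
    · have h9 : (3:ℕ) ^ 2 ≤ 3 ^ (j + 1 + 2) := Nat.pow_le_pow_right (by norm_num) (by omega)
      norm_num at h9
      exact misaligned t u i1 i2 (3 ^ (j + 1 + 2)) h9 hEq hC

lemma ham_cases (g h : A) : ham g h = 0 ∨ ham g h = 2 ∨ ham g h = 3 := by
  cases g <;> cases h <;> decide

end StewAux

theorem stmt_15 (t u : ℕ → A) (j : ℕ)
    (hj : ¬ (ham (t j) (u j) = 0 ∨ ham (t j) (u j) = 3))
    (hmin : ∀ i < j, ham (t i) (u i) = 0 ∨ ham (t i) (u i) = 3) :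
    ∀ w : List B, 3 ^ (j + 2) < w.length →
      ¬ (FactorOf w (stewInf t) ∧ FactorOf w (stewInf u)) := by
  intro w hw ⟨⟨i1, hF1⟩, ⟨i2, hF2⟩⟩
  have h2 : ham (t j) (u j) = 2 := by
    have := StewAux.ham_cases (t j) (u j); tauto
  apply StewAux.main j t u h2 i1 i2
  intro p hp
  have hpw : p < w.length := by omega
  rw [← hF1 p hpw, ← hF2 p hpw]
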